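/- Let N ≥ 7 be an integer, b₁, b₂ > 0, and let t ∈ (0,1) satisfy γ₃(t)·(γ₃(t) − 2·τ(t)²) > 0 and γ₃(t) + 2·γ₄(t) > 0. Then there exists exactly one triple (λ₀,λ₁,λ₂) ∈ (0,∞)³ at which all three partial derivatives ∂f₅/∂λ₀, ∂f₅/∂λ₁, ∂f₅/∂λ₂ vanish, and it satisfies λ₀^{N−2} = (γ₃(t)/(γ₃(t) − 2·τ(t)²))·(b₂/(2b₁)), λ₂^{(N−2)/2} − λ₁^{(N−2)/2} = (τ(t)/γ₃(t))·λ₀^{(N−2)/2}, and λ₁^{(N−2)/2}·λ₂^{(N−2)/2} = (b₂/(2b₁))/(γ₃(t) + 2·γ₄(t)). -/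
import Mathlib


open Real Filter Set

/-- `τ(t) = t^{-(N-2)} − 1`. -/
noncomputable def tau (N : ℕ) (t : ℝ) : ℝ := t ^ (-((N : ℝ) - 2)) - 1

/-- `γ₃(t) = (1−t²)^{-(N−2)} − (2t)^{-(N−2)} + (t²+1)^{-(N−2)}`. -/
noncomputable def gamma3 (N : ℕ) (t : ℝ) : ℝ :=
  (1 - t ^ 2) ^ (-((N : ℝ) - 2)) - (2 * t) ^ (-((N : ℝ) - 2)) +
    (t ^ 2 + 1) ^ (-((N : ℝ) - 2))

/-- `γ₄(t) = (√2·t)^{-(N−2)} − (t⁴+1)^{-(N−2)/2}`. -/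
noncomputable def gamma4 (N : ℕ) (t : ℝ) : ℝ :=
  (Real.sqrt 2 * t) ^ (-((N : ℝ) - 2)) - (t ^ 4 + 1) ^ (-((N : ℝ) - 2) / 2)

/-- `f₅(λ₀,λ₁,λ₂,t)`. -/
noncomputable def f5 (N : ℕ) (b1 b2 : ℝ) (l0 l1 l2 t : ℝ) : ℝ :=
  b1 * (l0 ^ ((N : ℝ) - 2) + 2 * gamma3 N t * (l1 ^ ((N : ℝ) - 2) + l2 ^ ((N : ℝ) - 2)) +
    8 * gamma4 N t * (l1 * l2) ^ (((N : ℝ) - 2) / 2) +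
    4 * tau N t * l0 ^ (((N : ℝ) - 2) / 2) *
      (l1 ^ (((N : ℝ) - 2) / 2) - l2 ^ (((N : ℝ) - 2) / 2))) -
  b2 * (((N : ℝ) - 2) / 2) * Real.log (l0 * l1 ^ 2 * l2 ^ 2)

lemma f5_deriv0 (N : ℕ) (b1 b2 m0 m1 m2 t : ℝ) (hb1 : b1 ≠ 0)
    (h0 : 0 < m0) (h1 : 0 < m1) (h2 : 0 < m2) :
    deriv (fun x => f5 N b1 b2 x m1 m2 t) m0 =
      (2 * b1 * (((N:ℝ)-2)/2) / m0) *
        (m0 ^ (((N:ℝ)-2)/2) * m0 ^ (((N:ℝ)-2)/2)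
          + 2 * tau N t * m0 ^ (((N:ℝ)-2)/2) * (m1 ^ (((N:ℝ)-2)/2) - m2 ^ (((N:ℝ)-2)/2))
          - b2 / (2 * b1)) := by
  set A := (N:ℝ) - 2 with hA
  have hA1 : HasDerivAt (fun x : ℝ => x ^ A) (A * m0 ^ (A-1)) m0 :=
    Real.hasDerivAt_rpow_const (Or.inl h0.ne')
  have hB1 : HasDerivAt (fun x : ℝ => x ^ (A/2)) ((A/2) * m0 ^ (A/2-1)) m0 :=
    Real.hasDerivAt_rpow_const (Or.inl h0.ne')
  have hL : HasDerivAt (fun x : ℝ => Real.log (x * m1^2 * m2^2))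
      ((1 * m1^2 * m2^2) / (m0 * m1^2 * m2^2)) m0 :=
    (((hasDerivAt_id m0).mul_const (m1^2)).mul_const (m2^2)).log (by positivity)
  have hF : HasDerivAt (fun x => f5 N b1 b2 x m1 m2 t)
      (b1 * (A * m0 ^ (A-1) + (4 * tau N t * ((A/2) * m0 ^ (A/2-1))) * (m1 ^ (A/2) - m2 ^ (A/2)))
        - b2 * (A/2) * ((1 * m1^2 * m2^2) / (m0 * m1^2 * m2^2))) m0 := by
    unfold f5
    exact (((((hA1.add_const (2 * gamma3 N t * (m1 ^ A + m2 ^ A))).add_const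
        (8 * gamma4 N t * (m1*m2) ^ (A/2))).add
        ((hB1.const_mul (4 * tau N t)).mul_const (m1 ^ (A/2) - m2 ^ (A/2)))).const_mul b1).sub
      (hL.const_mul (b2 * (A/2))))
  rw [hF.deriv]
  have e1 : m0 ^ (A-1) = m0 ^ (A/2) * m0 ^ (A/2) / m0 := by
    rw [← Real.rpow_add h0]
    rw [show A/2 + A/2 = (A - 1) + 1 by ring, Real.rpow_add h0, Real.rpow_one]
    field_simp
  have e2 : m0 ^ (A/2-1) = m0 ^ (A/2) / m0 := by
    rw [Real.rpow_sub h0, Real.rpow_one]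
  rw [e1, e2]
  field_simp
  ring

lemma f5_deriv1 (N : ℕ) (b1 b2 m0 m1 m2 t : ℝ) (hb1 : b1 ≠ 0)
    (h0 : 0 < m0) (h1 : 0 < m1) (h2 : 0 < m2) :
    deriv (fun y => f5 N b1 b2 m0 y m2 t) m1 =
      (4 * b1 * (((N:ℝ)-2)/2) / m1) *
        (gamma3 N t * (m1 ^ (((N:ℝ)-2)/2) * m1 ^ (((N:ℝ)-2)/2))
          + 2 * gamma4 N t * (m1 ^ (((N:ℝ)-2)/2) * m2 ^ (((N:ℝ)-2)/2))
          + tau N t * m0 ^ (((N:ℝ)-2)/2) * m1 ^ (((N:ℝ)-2)/2)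
          - b2 / (2 * b1)) := by
  set A := (N:ℝ) - 2 with hA
  have hA1 : HasDerivAt (fun y : ℝ => y ^ A) (A * m1 ^ (A-1)) m1 :=
    Real.hasDerivAt_rpow_const (Or.inl h1.ne')
  have hB1 : HasDerivAt (fun y : ℝ => y ^ (A/2)) ((A/2) * m1 ^ (A/2-1)) m1 :=
    Real.hasDerivAt_rpow_const (Or.inl h1.ne')
  have hM : HasDerivAt (fun y : ℝ => (y * m2) ^ (A/2))
      ((1 * m2) * (A/2) * (m1 * m2) ^ (A/2 - 1)) m1 :=
    ((hasDerivAt_id m1).mul_const m2).rpow_const (Or.inl (by positivity))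
  have hL : HasDerivAt (fun y : ℝ => Real.log (m0 * y ^ 2 * m2 ^ 2))
      ((m0 * ((2:ℕ) * m1 ^ (2-1))) * m2^2 / (m0 * m1 ^ 2 * m2 ^ 2)) m1 :=
    (((hasDerivAt_pow 2 m1).const_mul m0).mul_const (m2^2)).log (by positivity)
  have hF : HasDerivAt (fun y => f5 N b1 b2 m0 y m2 t)
      (b1 * ((2 * gamma3 N t * (A * m1 ^ (A-1))
          + 8 * gamma4 N t * ((1 * m2) * (A/2) * (m1 * m2) ^ (A/2 - 1)))
          + (4 * tau N t * m0 ^ (A/2)) * ((A/2) * m1 ^ (A/2-1)))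
        - b2 * (A/2) * ((m0 * ((2:ℕ) * m1 ^ (2-1))) * m2^2 / (m0 * m1 ^ 2 * m2 ^ 2))) m1 := by
    unfold f5
    exact ((((((hA1.add_const (m2 ^ A)).const_mul (2 * gamma3 N t)).const_add
        (m0 ^ A)).add (hM.const_mul (8 * gamma4 N t))).add
        ((hB1.sub_const (m2 ^ (A/2))).const_mul (4 * tau N t * m0 ^ (A/2)))).const_mul b1).sub
      (hL.const_mul (b2 * (A/2)))
  rw [hF.deriv]
  have e1 : m1 ^ (A-1) = m1 ^ (A/2) * m1 ^ (A/2) / m1 := by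
    rw [← Real.rpow_add h1]
    rw [show A/2 + A/2 = (A - 1) + 1 by ring, Real.rpow_add h1, Real.rpow_one]
    field_simp
  have e2 : m1 ^ (A/2-1) = m1 ^ (A/2) / m1 := by
    rw [Real.rpow_sub h1, Real.rpow_one]
  have e3 : (m1 * m2) ^ (A/2 - 1) = m1 ^ (A/2) * m2 ^ (A/2) / (m1 * m2) := by
    rw [Real.rpow_sub (mul_pos h1 h2), Real.rpow_one,
      Real.mul_rpow h1.le h2.le]
  rw [e1, e2, e3]
  push_cast
  field_simp
  ring

lemma f5_deriv2 (N : ℕ) (b1 b2 m0 m1 m2 t : ℝ) (hb1 : b1 ≠ 0)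
    (h0 : 0 < m0) (h1 : 0 < m1) (h2 : 0 < m2) :
    deriv (fun z => f5 N b1 b2 m0 m1 z t) m2 =
      (4 * b1 * (((N:ℝ)-2)/2) / m2) *
        (gamma3 N t * (m2 ^ (((N:ℝ)-2)/2) * m2 ^ (((N:ℝ)-2)/2))
          + 2 * gamma4 N t * (m1 ^ (((N:ℝ)-2)/2) * m2 ^ (((N:ℝ)-2)/2))
          - tau N t * m0 ^ (((N:ℝ)-2)/2) * m2 ^ (((N:ℝ)-2)/2)
          - b2 / (2 * b1)) := by
  set A := (N:ℝ) - 2 with hA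
  have hA1 : HasDerivAt (fun z : ℝ => z ^ A) (A * m2 ^ (A-1)) m2 :=
    Real.hasDerivAt_rpow_const (Or.inl h2.ne')
  have hB1 : HasDerivAt (fun z : ℝ => z ^ (A/2)) ((A/2) * m2 ^ (A/2-1)) m2 :=
    Real.hasDerivAt_rpow_const (Or.inl h2.ne')
  have hM : HasDerivAt (fun z : ℝ => (m1 * z) ^ (A/2))
      ((m1 * 1) * (A/2) * (m1 * m2) ^ (A/2 - 1)) m2 :=
    ((hasDerivAt_id m2).const_mul m1).rpow_const (Or.inl (by positivity))
  have hL : HasDerivAt (fun z : ℝ => Real.log (m0 * m1 ^ 2 * z ^ 2))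
      ((m0 * m1 ^ 2) * ((2:ℕ) * m2 ^ (2-1)) / (m0 * m1 ^ 2 * m2 ^ 2)) m2 :=
    ((hasDerivAt_pow 2 m2).const_mul (m0 * m1 ^ 2)).log (by positivity)
  have hF : HasDerivAt (fun z => f5 N b1 b2 m0 m1 z t)
      (b1 * ((2 * gamma3 N t * (A * m2 ^ (A-1))
          + 8 * gamma4 N t * ((m1 * 1) * (A/2) * (m1 * m2) ^ (A/2 - 1)))
          + (4 * tau N t * m0 ^ (A/2)) * (-((A/2) * m2 ^ (A/2-1))))
        - b2 * (A/2) * ((m0 * m1 ^ 2) * ((2:ℕ) * m2 ^ (2-1)) / (m0 * m1 ^ 2 * m2 ^ 2))) m2 := by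
    unfold f5
    exact ((((((hA1.const_add (m1 ^ A)).const_mul (2 * gamma3 N t)).const_add
        (m0 ^ A)).add (hM.const_mul (8 * gamma4 N t))).add
        ((hB1.const_sub (m1 ^ (A/2))).const_mul (4 * tau N t * m0 ^ (A/2)))).const_mul b1).sub
      (hL.const_mul (b2 * (A/2)))
  rw [hF.deriv]
  have e1 : m2 ^ (A-1) = m2 ^ (A/2) * m2 ^ (A/2) / m2 := by
    rw [← Real.rpow_add h2]
    rw [show A/2 + A/2 = (A - 1) + 1 by ring, Real.rpow_add h2, Real.rpow_one]
    field_simp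
  have e2 : m2 ^ (A/2-1) = m2 ^ (A/2) / m2 := by
    rw [Real.rpow_sub h2, Real.rpow_one]
  have e3 : (m1 * m2) ^ (A/2 - 1) = m1 ^ (A/2) * m2 ^ (A/2) / (m1 * m2) := by
    rw [Real.rpow_sub (mul_pos h1 h2), Real.rpow_one,
      Real.mul_rpow h1.le h2.le]
  rw [e1, e2, e3]
  push_cast
  field_simp
  ring



lemma key_alg (g3 g4 T c : ℝ) (hc : 0 < c)
    (h1 : 0 < g3 * (g3 - 2 * T ^ 2)) (h2 : 0 < g3 + 2 * g4) :
    ∃ u0 v0 w0 : ℝ, 0 < u0 ∧ 0 < v0 ∧ 0 < w0 ∧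
      (∀ u v w : ℝ, 0 < u → 0 < v → 0 < w →
        ((u * u + 2 * T * u * (v - w) = c ∧
          g3 * (v * v) + 2 * g4 * (v * w) + T * u * v = c ∧
          g3 * (w * w) + 2 * g4 * (v * w) - T * u * w = c) ↔
          (u = u0 ∧ v = v0 ∧ w = w0))) ∧
      u0 * u0 = g3 / (g3 - 2 * T ^ 2) * c ∧
      w0 - v0 = T / g3 * u0 ∧
      v0 * w0 = c / (g3 + 2 * g4) := by
  have hg3 : g3 ≠ 0 := by rintro h; rw [h] at h1; simp at h1
  have hg32 : g3 - 2 * T ^ 2 ≠ 0 := by rintro h; rw [h] at h1; simp at h1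
  have hr : 0 < g3 / (g3 - 2 * T ^ 2) := by
    rcases mul_pos_iff.mp h1 with ⟨a, b⟩ | ⟨a, b⟩
    · exact div_pos a b
    · exact div_pos_of_neg_of_neg a b
  set u0 := Real.sqrt (g3 / (g3 - 2 * T ^ 2) * c) with hu0def
  have hu0 : 0 < u0 := Real.sqrt_pos.mpr (by positivity)
  have hu0sq : u0 * u0 = g3 / (g3 - 2 * T ^ 2) * c :=
    Real.mul_self_sqrt (by positivity)
  set p := c / (g3 + 2 * g4) with hpdef
  have hp : 0 < p := div_pos hc h2
  set s := T / g3 * u0 with hsdef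
  set D := Real.sqrt (s ^ 2 + 4 * p) with hDdef
  have hDsq : D ^ 2 = s ^ 2 + 4 * p := Real.sq_sqrt (by positivity)
  have hD0 : 0 ≤ D := Real.sqrt_nonneg _
  have habs : |s| < D := by
    have h' : Real.sqrt (s ^ 2) < D := Real.sqrt_lt_sqrt (sq_nonneg s) (by linarith)
    rwa [Real.sqrt_sq_eq_abs] at h'
  obtain ⟨hs1, hs2⟩ := abs_lt.mp habs
  set v0 := (D - s) / 2 with hv0def
  set w0 := (D + s) / 2 with hw0def
  have hv0 : 0 < v0 := by rw [hv0def]; linarith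
  have hw0 : 0 < w0 := by rw [hw0def]; linarith
  have hvw : v0 * w0 = p := by rw [hv0def, hw0def]; linear_combination hDsq / 4
  have hwv : w0 - v0 = s := by rw [hv0def, hw0def]; ring
  have hgs : g3 * s = T * u0 := by rw [hsdef]; field_simp
  have hu0e : u0 * u0 * (g3 - 2 * T ^ 2) = g3 * c := by
    rw [hu0sq]; field_simp
  have hpe : (g3 + 2 * g4) * p = c := by rw [hpdef]; field_simp
  refine ⟨u0, v0, w0, hu0, hv0, hw0, ?_, hu0sq, hwv.trans hsdef, hvw.trans hpdef⟩
  intro u v w hu hv hw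
  constructor
  · rintro ⟨e0, e1, e2⟩
    have hsub : g3 * (w - v) = T * u := by
      have h12 : (v + w) * (g3 * (w - v) - T * u) = 0 := by linear_combination e2 - e1
      have hvw' : v + w ≠ 0 := by positivity
      have := (mul_eq_zero.mp h12).resolve_left hvw'
      linarith
    have huu : u * u * (g3 - 2 * T ^ 2) = g3 * c := by
      linear_combination g3 * e0 + 2 * T * u * hsub
    have huu0 : u * u = u0 * u0 := mul_right_cancel₀ hg32 (huu.trans hu0e.symm)
    have hu' : u = u0 := by
      have hfac : (u - u0) * (u + u0) = 0 := by linear_combination huu0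
      have := (mul_eq_zero.mp hfac).resolve_right (by positivity)
      linarith
    subst hu'
    have hvw2 : (g3 + 2 * g4) * (v * w) = c := by
      have h' : 2 * g3 * ((g3 + 2 * g4) * (v * w) - c) = 0 := by
        linear_combination g3 * e1 + g3 * e2 - g3 * (w - v) * hsub
      have := (mul_eq_zero.mp h').resolve_left (by simpa using hg3)
      linarith
    have hvwp : v * w = p := by
      have := hvw2.trans hpe.symm
      exact mul_left_cancel₀ (ne_of_gt h2) this
    have hwvs : w - v = s := by
      have : g3 * (w - v) = g3 * s := by rw [hsub, hgs]
      exact mul_left_cancel₀ hg3 this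
    have hvv0 : v = v0 := by
      have hfac : (v - v0) * (v + v0 + s) = 0 := by
        have h1' : v * (v + s) = v0 * (v0 + s) := by
          rw [show v + s = w by linarith, show v0 + s = w0 by linarith, hvwp, hvw]
        linear_combination h1'
      have hpos : v + v0 + s ≠ 0 := by
        have : v + v0 + s = v + w0 := by rw [← hwv]; ring
        rw [this]; positivity
      have := (mul_eq_zero.mp hfac).resolve_right hpos
      linarith
    exact ⟨rfl, hvv0, by linarith⟩
  · rintro ⟨rfl, rfl, rfl⟩
    refine ⟨?_, ?_, ?_⟩
    · have hg : g3 * (u0 * u0 + 2 * T * u0 * (v0 - w0) - c) = 0 := by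
        linear_combination hu0e - 2 * T * u0 * hgs - 2 * T * u0 * g3 * hwv
      have := (mul_eq_zero.mp hg).resolve_left hg3
      linarith
    · have hg : g3 * (g3 * (v0 * v0) + 2 * g4 * (v0 * w0) + T * u0 * v0 - c) = 0 := by
        linear_combination (-(g3 * v0)) * hgs + (-(g3 ^ 2 * v0)) * hwv +
          (g3 * (g3 + 2 * g4)) * hvw + g3 * hpe
      have := (mul_eq_zero.mp hg).resolve_left hg3
      linarith
    · have hg : g3 * (g3 * (w0 * w0) + 2 * g4 * (v0 * w0) - T * u0 * w0 - c) = 0 := by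
        linear_combination (g3 * w0) * hgs + (g3 ^ 2 * w0) * hwv +
          (g3 * (g3 + 2 * g4)) * hvw + g3 * hpe
      have := (mul_eq_zero.mp hg).resolve_left hg3
      linarith

theorem stmt_17 (N : ℕ) (hN : 7 ≤ N) (b1 b2 : ℝ) (hb1 : 0 < b1) (hb2 : 0 < b2)
    (t : ℝ) (ht : t ∈ Ioo (0 : ℝ) 1)
    (h1 : 0 < gamma3 N t * (gamma3 N t - 2 * (tau N t) ^ 2))
    (h2 : 0 < gamma3 N t + 2 * gamma4 N t) :
    ∃ l0 l1 l2 : ℝ, 0 < l0 ∧ 0 < l1 ∧ 0 < l2 ∧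
      (∀ m0 m1 m2 : ℝ, 0 < m0 → 0 < m1 → 0 < m2 →
        ((deriv (fun x => f5 N b1 b2 x m1 m2 t) m0 = 0 ∧
          deriv (fun y => f5 N b1 b2 m0 y m2 t) m1 = 0 ∧
          deriv (fun z => f5 N b1 b2 m0 m1 z t) m2 = 0) ↔
          (m0 = l0 ∧ m1 = l1 ∧ m2 = l2))) ∧
      l0 ^ ((N : ℝ) - 2) =
        (gamma3 N t / (gamma3 N t - 2 * (tau N t) ^ 2)) * (b2 / (2 * b1)) ∧
      l2 ^ (((N : ℝ) - 2) / 2) - l1 ^ (((N : ℝ) - 2) / 2) =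
        (tau N t / gamma3 N t) * l0 ^ (((N : ℝ) - 2) / 2) ∧
      l1 ^ (((N : ℝ) - 2) / 2) * l2 ^ (((N : ℝ) - 2) / 2) =
        (b2 / (2 * b1)) / (gamma3 N t + 2 * gamma4 N t) := by
  have hb1' : b1 ≠ 0 := hb1.ne'
  have hc0 : 0 < b2 / (2 * b1) := by positivity
  obtain ⟨u0, v0, w0, hu0, hv0, hw0, hiff, hsq, hdiff, hprod⟩ :=
    key_alg (gamma3 N t) (gamma4 N t) (tau N t) (b2 / (2 * b1)) hc0 h1 h2
  have h7 : (7 : ℝ) ≤ (N : ℝ) := by exact_mod_cast hN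
  have hApos : 0 < (N : ℝ) - 2 := by linarith
  have hA0 : (N : ℝ) - 2 ≠ 0 := ne_of_gt hApos
  have hroot : ∀ x : ℝ, 0 < x → (x ^ (2 / ((N:ℝ)-2))) ^ (((N:ℝ)-2)/2) = x := by
    intro x hx
    rw [← Real.rpow_mul hx.le,
      show (2 / ((N:ℝ)-2)) * (((N:ℝ)-2)/2) = 1 by field_simp, Real.rpow_one]
  have hroot2 : ∀ m : ℝ, 0 < m → m = (m ^ (((N:ℝ)-2)/2)) ^ (2 / ((N:ℝ)-2)) := by
    intro m hm
    rw [← Real.rpow_mul hm.le,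
      show (((N:ℝ)-2)/2) * (2 / ((N:ℝ)-2)) = 1 by field_simp, Real.rpow_one]
  have hl0 : (u0 ^ (2 / ((N:ℝ)-2))) ^ (((N:ℝ)-2)/2) = u0 := hroot u0 hu0
  have hl1 : (v0 ^ (2 / ((N:ℝ)-2))) ^ (((N:ℝ)-2)/2) = v0 := hroot v0 hv0
  have hl2 : (w0 ^ (2 / ((N:ℝ)-2))) ^ (((N:ℝ)-2)/2) = w0 := hroot w0 hw0
  refine ⟨u0 ^ (2 / ((N:ℝ)-2)), v0 ^ (2 / ((N:ℝ)-2)), w0 ^ (2 / ((N:ℝ)-2)),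
    Real.rpow_pos_of_pos hu0 _, Real.rpow_pos_of_pos hv0 _, Real.rpow_pos_of_pos hw0 _,
    ?_, ?_, ?_, ?_⟩
  · intro m0 m1 m2 hm0 hm1 hm2
    have hco0 : (2 * b1 * (((N:ℝ)-2)/2) / m0) ≠ 0 := by
      apply ne_of_gt; apply div_pos _ hm0; nlinarith
    have hco1 : (4 * b1 * (((N:ℝ)-2)/2) / m1) ≠ 0 := by
      apply ne_of_gt; apply div_pos _ hm1; nlinarith
    have hco2 : (4 * b1 * (((N:ℝ)-2)/2) / m2) ≠ 0 := by
      apply ne_of_gt; apply div_pos _ hm2; nlinarith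
    rw [f5_deriv0 N b1 b2 m0 m1 m2 t hb1' hm0 hm1 hm2,
        f5_deriv1 N b1 b2 m0 m1 m2 t hb1' hm0 hm1 hm2,
        f5_deriv2 N b1 b2 m0 m1 m2 t hb1' hm0 hm1 hm2,
        mul_eq_zero, mul_eq_zero, mul_eq_zero]
    constructor
    · rintro ⟨d0, d1, d2⟩
      have e0 := d0.resolve_left hco0
      have e1 := d1.resolve_left hco1
      have e2 := d2.resolve_left hco2
      obtain ⟨q0, q1, q2⟩ := (hiff (m0 ^ (((N:ℝ)-2)/2)) (m1 ^ (((N:ℝ)-2)/2))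
        (m2 ^ (((N:ℝ)-2)/2)) (Real.rpow_pos_of_pos hm0 _) (Real.rpow_pos_of_pos hm1 _)
        (Real.rpow_pos_of_pos hm2 _)).mp ⟨by linarith, by linarith, by linarith⟩
      refine ⟨?_, ?_, ?_⟩
      · rw [hroot2 m0 hm0, q0]
      · rw [hroot2 m1 hm1, q1]
      · rw [hroot2 m2 hm2, q2]
    · rintro ⟨rfl, rfl, rfl⟩
      obtain ⟨e0, e1, e2⟩ := (hiff u0 v0 w0 hu0 hv0 hw0).mpr ⟨rfl, rfl, rfl⟩
      rw [hl0, hl1, hl2]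
      exact ⟨Or.inr (by linarith), Or.inr (by linarith), Or.inr (by linarith)⟩
  · have e : (u0 ^ (2/((N:ℝ)-2))) ^ ((N:ℝ)-2) = u0 * u0 := by
      rw [← Real.rpow_mul hu0.le, show (2/((N:ℝ)-2)) * ((N:ℝ)-2) = 1 + 1 by field_simp; ring,
        Real.rpow_add hu0, Real.rpow_one]
    rw [e]; exact hsq
  · rw [hl0, hl1, hl2]
    exact hdiff
  · rw [hl1, hl2]
    exact hprod
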